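/- Tightness of the variational bound (equality case of Theorem 1): Let Ω be a finite type with probability mass function P, let X : Ω → 𝒳 and S : Ω → 𝒮 be random variables into finite types, and let Q : 𝒳 → 𝒮 → ℝ be a family of probability mass functions on 𝒮 with Q x s > 0 whenever P(X = x, S = s) > 0. Then I(X; S) = H(S) + ∑_{x,s} P(X = x, S = s) · log (Q x s) holds if and only if for every x with P(X = x) > 0 and every s, Q x s = P(S = s | X = x). In particular, the variational lower bound H(S) + ∑_{x,s} P(X = x, S = s) · log(Q x s) attains its maximum value I(X; S) exactly when Q is the true conditional distribution. -/

import Mathlib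

open Finset Real

/-- Marginal probability `P(X = x) = ∑_{ω : X ω = x} P ω`. -/
noncomputable def margin {Ω 𝒳 : Type*} [Fintype Ω] [DecidableEq 𝒳]
    (P : Ω → ℝ) (X : Ω → 𝒳) (x : 𝒳) : ℝ :=
  ∑ ω, if X ω = x then P ω else 0

/-- Joint probability `P(X = x, S = s) = ∑_{ω : X ω = x ∧ S ω = s} P ω`. -/
noncomputable def joint {Ω 𝒳 𝒮 : Type*} [Fintype Ω] [DecidableEq 𝒳] [DecidableEq 𝒮]
    (P : Ω → ℝ) (X : Ω → 𝒳) (S : Ω → 𝒮) (x : 𝒳) (s : 𝒮) : ℝ :=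
  ∑ ω, if X ω = x ∧ S ω = s then P ω else 0

/-- Shannon entropy `H(S) = -∑_s P(S = s) log P(S = s)` (with `0 · log 0 = 0`,
which holds automatically since `Real.log 0 = 0`). -/
noncomputable def entropy {Ω 𝒮 : Type*} [Fintype Ω] [Fintype 𝒮] [DecidableEq 𝒮]
    (P : Ω → ℝ) (S : Ω → 𝒮) : ℝ :=
  -∑ s, margin P S s * Real.log (margin P S s)

/-- Mutual information
`I(X;S) = ∑_{x,s} P(X = x, S = s) · log (P(X = x, S = s) / (P(X = x) P(S = s)))`;
summands with `P(X = x, S = s) = 0` vanish since they have factor `0`. -/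
noncomputable def mutualInfo {Ω 𝒳 𝒮 : Type*} [Fintype Ω] [Fintype 𝒳] [Fintype 𝒮]
    [DecidableEq 𝒳] [DecidableEq 𝒮] (P : Ω → ℝ) (X : Ω → 𝒳) (S : Ω → 𝒮) : ℝ :=
  ∑ x, ∑ s, joint P X S x s *
    Real.log (joint P X S x s / (margin P X x * margin P S s))

/-!
With `J x s = P(X = x, S = s)` and `M x = P(X = x)`, the gap `I(X;S) - (H(S) + ∑ J log Q)` is
`∑_{x,s} J log (J / (M Q))`, the expected Kullback–Leibler divergence of `Q x` from the posterior.
Since `∑_s Q x s = 1`, the weights `J` and `M Q` have equal total mass, so this sum is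
`∑_{x,s} M Q · klFun (J / (M Q))` with `klFun y = y log y + 1 - y`, which is nonnegative and
vanishes only at `y = 1`. Hence the gap is zero iff `J = M Q`, i.e. iff `Q x = P(S = · | X = x)`
wherever `M x > 0`.
-/

open InformationTheory

section Gibbs

variable {ι : Type*} [Fintype ι]

lemma mul_log_div_sub_sub_eq_mul_klFun {p r : ℝ} (hrp : r = 0 → p = 0) :
    p * log (p / r) - (p - r) = r * klFun (p / r) := by
  rcases eq_or_ne r 0 with rfl | hr
  · simp [hrp rfl]
  · rw [klFun_apply]
    field_simp
    ring

lemma mul_klFun_div_eq_zero_iff {p r : ℝ} (hp : 0 ≤ p) (hr : 0 ≤ r) (hrp : r = 0 → p = 0) :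
    r * klFun (p / r) = 0 ↔ p = r := by
  rcases eq_or_ne r 0 with rfl | hr₀
  · simp [hrp rfl]
  · rw [mul_eq_zero, klFun_eq_zero_iff (div_nonneg hp hr), div_eq_one_iff_eq hr₀]
    simp [hr₀]

lemma sum_mul_log_div_eq_zero_iff {p r : ι → ℝ} (hp : ∀ i, 0 ≤ p i) (hr : ∀ i, 0 ≤ r i)
    (hrp : ∀ i, r i = 0 → p i = 0) (hmass : ∑ i, p i = ∑ i, r i) :
    ∑ i, p i * log (p i / r i) = 0 ↔ p = r := by
  have hsum : ∑ i, p i * log (p i / r i) = ∑ i, r i * klFun (p i / r i) := by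
    rw [← sub_zero (∑ i, _), ← sub_eq_zero_of_eq hmass, ← sum_sub_distrib, ← sum_sub_distrib]
    exact sum_congr rfl fun i _ => mul_log_div_sub_sub_eq_mul_klFun (hrp i)
  rw [hsum, sum_eq_zero_iff_of_nonneg fun i _ =>
    mul_nonneg (hr i) (klFun_nonneg (div_nonneg (hp i) (hr i))), funext_iff]
  simp only [mem_univ, true_implies, mul_klFun_div_eq_zero_iff (hp _) (hr _) (hrp _)]

end Gibbs

section Marginals

variable {Ω 𝒳 𝒮 : Type*} [Fintype Ω] [DecidableEq 𝒳] [DecidableEq 𝒮]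

lemma joint_nonneg {P : Ω → ℝ} (hP : ∀ ω, 0 ≤ P ω) (X : Ω → 𝒳) (S : Ω → 𝒮) (x : 𝒳) (s : 𝒮) :
    0 ≤ joint P X S x s :=
  sum_nonneg fun ω _ => by split_ifs <;> simp [hP ω]

lemma margin_nonneg {P : Ω → ℝ} (hP : ∀ ω, 0 ≤ P ω) (X : Ω → 𝒳) (x : 𝒳) :
    0 ≤ margin P X x :=
  sum_nonneg fun ω _ => by split_ifs <;> simp [hP ω]

lemma joint_le_margin_left {P : Ω → ℝ} (hP : ∀ ω, 0 ≤ P ω) (X : Ω → 𝒳) (S : Ω → 𝒮)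
    (x : 𝒳) (s : 𝒮) : joint P X S x s ≤ margin P X x :=
  sum_le_sum fun ω _ => by split_ifs <;> simp_all

lemma joint_le_margin_right {P : Ω → ℝ} (hP : ∀ ω, 0 ≤ P ω) (X : Ω → 𝒳) (S : Ω → 𝒮)
    (x : 𝒳) (s : 𝒮) : joint P X S x s ≤ margin P S s :=
  sum_le_sum fun ω _ => by split_ifs <;> simp_all

lemma sum_joint_left [Fintype 𝒳] (P : Ω → ℝ) (X : Ω → 𝒳) (S : Ω → 𝒮) (s : 𝒮) :
    ∑ x, joint P X S x s = margin P S s := by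
  unfold joint margin
  rw [sum_comm]
  refine sum_congr rfl fun ω _ => ?_
  by_cases h : S ω = s <;> simp [h]

lemma sum_joint_right [Fintype 𝒮] (P : Ω → ℝ) (X : Ω → 𝒳) (S : Ω → 𝒮) (x : 𝒳) :
    ∑ s, joint P X S x s = margin P X x := by
  unfold joint margin
  rw [sum_comm]
  refine sum_congr rfl fun ω _ => ?_
  by_cases h : X ω = x <;> simp [h]

lemma joint_eq_margin_mul_iff {P : Ω → ℝ} (hP : ∀ ω, 0 ≤ P ω) (X : Ω → 𝒳) (S : Ω → 𝒮)
    (Q : 𝒳 → 𝒮 → ℝ) :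
    (∀ x s, joint P X S x s = margin P X x * Q x s) ↔
      ∀ x, 0 < margin P X x → ∀ s, Q x s = joint P X S x s / margin P X x := by
  refine ⟨fun h x hx s => by rw [h, mul_div_cancel_left₀ _ hx.ne'], fun h x s => ?_⟩
  rcases (margin_nonneg hP X x).eq_or_lt with hx | hx
  · rw [← hx, zero_mul]
    exact le_antisymm (hx ▸ joint_le_margin_left hP X S x s) (joint_nonneg hP X S x s)
  · rw [h x hx s, mul_div_cancel₀ _ hx.ne']

end Marginals

section VariationalBound

variable {Ω 𝒳 𝒮 : Type*} [Fintype Ω] [Fintype 𝒳] [Fintype 𝒮] [DecidableEq 𝒳] [DecidableEq 𝒮]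

noncomputable def variationalBound (P : Ω → ℝ) (X : Ω → 𝒳) (S : Ω → 𝒮) (Q : 𝒳 → 𝒮 → ℝ) : ℝ :=
  entropy P S + ∑ x, ∑ s, joint P X S x s * log (Q x s)

lemma entropy_eq_neg_sum_joint_mul_log_margin (P : Ω → ℝ) (X : Ω → 𝒳) (S : Ω → 𝒮) :
    entropy P S = -∑ x, ∑ s, joint P X S x s * log (margin P S s) := by
  rw [entropy, sum_comm]
  simp only [← sum_mul, sum_joint_left]

lemma mutualInfo_sub_variationalBound {P : Ω → ℝ} (hP : ∀ ω, 0 ≤ P ω) (X : Ω → 𝒳) (S : Ω → 𝒮)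
    {Q : 𝒳 → 𝒮 → ℝ} (hQpos : ∀ x s, 0 < joint P X S x s → 0 < Q x s) :
    mutualInfo P X S - variationalBound P X S Q =
      ∑ x, ∑ s, joint P X S x s * log (joint P X S x s / (margin P X x * Q x s)) := by
  set J := joint P X S
  set M := margin P X
  set N := margin P S
  have hsplit : mutualInfo P X S - variationalBound P X S Q =
      ∑ x, ∑ s, (J x s * log (J x s / (M x * N s)) + J x s * log (N s) - J x s * log (Q x s)) := by
    rw [variationalBound, entropy_eq_neg_sum_joint_mul_log_margin P X S, mutualInfo]
    simp only [sum_add_distrib, sum_sub_distrib]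
    ring
  rw [hsplit]
  refine sum_congr rfl fun x _ => sum_congr rfl fun s _ => ?_
  rcases (show 0 ≤ J x s from joint_nonneg hP X S x s).eq_or_lt with h | h
  · simp [← h]
  have hM : 0 < M x := h.trans_le (joint_le_margin_left hP X S x s)
  have hN : 0 < N s := h.trans_le (joint_le_margin_right hP X S x s)
  have hQ : 0 < Q x s := hQpos x s h
  rw [log_div h.ne' (by positivity), log_div h.ne' (by positivity), log_mul hM.ne' hN.ne',
    log_mul hM.ne' hQ.ne']
  ring

end VariationalBound

theorem variational_bound_tight_iff_true_posterior_general
    {Ω 𝒳 𝒮 : Type*} [Fintype Ω] [Fintype 𝒳] [Fintype 𝒮] [DecidableEq 𝒳] [DecidableEq 𝒮]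
    (P : Ω → ℝ) (hP : ∀ ω, 0 ≤ P ω)
    (X : Ω → 𝒳) (S : Ω → 𝒮)
    (Q : 𝒳 → 𝒮 → ℝ)
    (hQnonneg : ∀ x s, 0 ≤ Q x s) (hQsum : ∀ x, ∑ s, Q x s = 1)
    (hQpos : ∀ x s, 0 < joint P X S x s → 0 < Q x s) :
    (mutualInfo P X S =
        entropy P S + ∑ x, ∑ s, joint P X S x s * Real.log (Q x s))
      ↔ ∀ x, 0 < margin P X x →
          ∀ s, Q x s = joint P X S x s / margin P X x := by
  have hgap : ∀ xs : 𝒳 × 𝒮, margin P X xs.1 * Q xs.1 xs.2 = 0 → joint P X S xs.1 xs.2 = 0 := by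
    rintro ⟨x, s⟩ h
    refine le_antisymm ?_ (joint_nonneg hP X S x s)
    rcases mul_eq_zero.1 h with hM | hQ
    · exact hM ▸ joint_le_margin_left hP X S x s
    · exact not_lt.1 fun hJ => (hQpos x s hJ).ne' hQ
  have hmass : ∑ xs : 𝒳 × 𝒮, joint P X S xs.1 xs.2 =
      ∑ xs : 𝒳 × 𝒮, margin P X xs.1 * Q xs.1 xs.2 := by
    simp only [Fintype.sum_prod_type, ← mul_sum, hQsum, mul_one, sum_joint_right]
  change mutualInfo P X S = variationalBound P X S Q ↔ _
  rw [← sub_eq_zero, mutualInfo_sub_variationalBound hP X S hQpos, ← Fintype.sum_prod_type',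
    sum_mul_log_div_eq_zero_iff (fun _ => joint_nonneg hP X S _ _)
      (fun _ => mul_nonneg (margin_nonneg hP X _) (hQnonneg _ _)) hgap hmass,
    funext_iff, Prod.forall]
  exact joint_eq_margin_mul_iff hP X S Q

/-- Tightness of the variational bound: the lower bound
`H(S) + ∑_{x,s} P(X=x,S=s) log (Q x s)` equals `I(X;S)` if and only if `Q` is
the true conditional distribution `Q x s = P(S = s | X = x)` for every `x`
with `P(X = x) > 0` and every `s`. -/
theorem variational_bound_tight_iff_true_posterior
    {Ω 𝒳 𝒮 : Type*} [Fintype Ω] [Fintype 𝒳] [Fintype 𝒮] [DecidableEq 𝒳] [DecidableEq 𝒮]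
    (P : Ω → ℝ) (hP : ∀ ω, 0 ≤ P ω) (hPsum : ∑ ω, P ω = 1)
    (X : Ω → 𝒳) (S : Ω → 𝒮)
    (Q : 𝒳 → 𝒮 → ℝ)
    (hQnonneg : ∀ x s, 0 ≤ Q x s) (hQsum : ∀ x, ∑ s, Q x s = 1)
    (hQpos : ∀ x s, 0 < joint P X S x s → 0 < Q x s) :
    (mutualInfo P X S =
        entropy P S + ∑ x, ∑ s, joint P X S x s * Real.log (Q x s))
      ↔ ∀ x, 0 < margin P X x →
          ∀ s, Q x s = joint P X S x s / margin P X x :=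
  variational_bound_tight_iff_true_posterior_general P hP X S Q hQnonneg hQsum hQpos
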